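/- Let (C_κ, d_κ) for κ ∈ ℤ/3 be chain complexes over 𝔽₂ with chain maps f_κ : C_κ → C_{κ+1}. Suppose there exist 𝔽₂-linear maps H_κ : C_{κ+1} → C_κ and P_κ : C_κ → C_κ satisfying (1) [d, H_κ] = f_{κ-1} ∘ f_{κ+1} and (2) [d, P_κ] = Id_{C_κ} + H_κ ∘ f_κ + f_{κ-1} ∘ H_{κ-1} for all κ ∈ ℤ/3. Then the induced maps 𝔣_κ : H_*(C_κ) → H_*(C_{κ+1}) on homology form an exact triangle, i.e., for each κ, ker(𝔣_κ) = im(𝔣_{κ-1}). -/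
import Mathlib

private lemma tw2 {M : Type*} [AddCommGroup M] [Module (ZMod 2) M] (a : M) :
    a + a = 0 := by
  have : ((1 : ZMod 2) + 1) • a = 0 := by
    rw [show (1 : ZMod 2) + 1 = 0 by decide, zero_smul]
  rwa [add_smul, one_smul] at this

private lemma key2 {M : Type*} [AddCommGroup M] [Module (ZMod 2) M] {a b : M}
    (e : a + b = 0) : a = b := by
  rw [← add_zero a, ← tw2 b, ← add_assoc, e, zero_add]

private lemma aux
    (A B C : Type*) [AddCommGroup A] [AddCommGroup B] [AddCommGroup C]
    [Module (ZMod 2) A] [Module (ZMod 2) B] [Module (ZMod 2) C]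
    (dA : A →ₗ[ZMod 2] A) (dB : B →ₗ[ZMod 2] B) (dC : C →ₗ[ZMod 2] C)
    (f : A →ₗ[ZMod 2] B) (g : B →ₗ[ZMod 2] C) (h : C →ₗ[ZMod 2] A)
    (hf : dB ∘ₗ f = f ∘ₗ dA) (hg : dC ∘ₗ g = g ∘ₗ dB)
    (HA : B →ₗ[ZMod 2] A) (HB : C →ₗ[ZMod 2] B) (HC : A →ₗ[ZMod 2] C)
    (P : A →ₗ[ZMod 2] A)
    (hHA : HA ∘ₗ dB + dA ∘ₗ HA = h ∘ₗ g)
    (hHB : HB ∘ₗ dC + dB ∘ₗ HB = f ∘ₗ h)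
    (hHC : HC ∘ₗ dA + dC ∘ₗ HC = g ∘ₗ f)
    (hP : P ∘ₗ dA + dA ∘ₗ P = LinearMap.id + HA ∘ₗ f + h ∘ₗ HC) :
    ∀ z : A, dA z = 0 → ((∃ x, f z = dB x) ↔ ∃ y, dC y = 0 ∧ ∃ w, z = h y + dA w) := by
  intro z hz
  constructor
  · rintro ⟨x, hx⟩
    refine ⟨g x + HC z, ?_, HA x + P z, ?_⟩
    · have h1 := LinearMap.congr_fun hg x
      have h2 := LinearMap.congr_fun hHC z
      simp only [LinearMap.comp_apply, LinearMap.add_apply] at h1 h2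
      rw [hz, map_zero, zero_add] at h2
      rw [map_add, h1, ← hx, h2]
      exact tw2 _
    · have h3 := LinearMap.congr_fun hHA x
      have h4 := LinearMap.congr_fun hP z
      simp only [LinearMap.comp_apply, LinearMap.add_apply, LinearMap.id_apply] at h3 h4
      rw [hz, map_zero, zero_add] at h4
      rw [← hx] at h3
      apply key2
      rw [map_add, map_add, h4, ← h3]
      abel_nf
      simp only [two_nsmul, two_zsmul, tw2, add_zero, zero_add]
  · rintro ⟨y, hy, w, hw⟩
    refine ⟨HB y + f w, ?_⟩
    have h5 := LinearMap.congr_fun hHB y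
    have h6 := LinearMap.congr_fun hf w
    simp only [LinearMap.comp_apply, LinearMap.add_apply] at h5 h6
    rw [hy, map_zero, zero_add] at h5
    rw [hw, map_add, map_add, ← h5, h6]


/-- Proposition 2.1: algebraic criterion for an exact triangle.  Exactness of the
induced maps on homology is expressed at the chain level: a cycle `z` maps to a
boundary under `f_κ` iff it is, up to a boundary, the image of a cycle under `f_{κ-1}`. -/
theorem stmt_0
    (C₀ C₁ C₂ : Type*)
    [AddCommGroup C₀] [AddCommGroup C₁] [AddCommGroup C₂]
    [Module (ZMod 2) C₀] [Module (ZMod 2) C₁] [Module (ZMod 2) C₂]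
    (d₀ : C₀ →ₗ[ZMod 2] C₀) (d₁ : C₁ →ₗ[ZMod 2] C₁) (d₂ : C₂ →ₗ[ZMod 2] C₂)
    (hd₀ : d₀ ∘ₗ d₀ = 0) (hd₁ : d₁ ∘ₗ d₁ = 0) (hd₂ : d₂ ∘ₗ d₂ = 0)
    (f₀ : C₀ →ₗ[ZMod 2] C₁) (f₁ : C₁ →ₗ[ZMod 2] C₂) (f₂ : C₂ →ₗ[ZMod 2] C₀)
    (hf₀ : d₁ ∘ₗ f₀ = f₀ ∘ₗ d₀) (hf₁ : d₂ ∘ₗ f₁ = f₁ ∘ₗ d₁) (hf₂ : d₀ ∘ₗ f₂ = f₂ ∘ₗ d₂)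
    (H₀ : C₁ →ₗ[ZMod 2] C₀) (H₁ : C₂ →ₗ[ZMod 2] C₁) (H₂ : C₀ →ₗ[ZMod 2] C₂)
    (P₀ : C₀ →ₗ[ZMod 2] C₀) (P₁ : C₁ →ₗ[ZMod 2] C₁) (P₂ : C₂ →ₗ[ZMod 2] C₂)
    (hH₀ : H₀ ∘ₗ d₁ + d₀ ∘ₗ H₀ = f₂ ∘ₗ f₁)
    (hH₁ : H₁ ∘ₗ d₂ + d₁ ∘ₗ H₁ = f₀ ∘ₗ f₂)
    (hH₂ : H₂ ∘ₗ d₀ + d₂ ∘ₗ H₂ = f₁ ∘ₗ f₀)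
    (hP₀ : P₀ ∘ₗ d₀ + d₀ ∘ₗ P₀ = LinearMap.id + H₀ ∘ₗ f₀ + f₂ ∘ₗ H₂)
    (hP₁ : P₁ ∘ₗ d₁ + d₁ ∘ₗ P₁ = LinearMap.id + H₁ ∘ₗ f₁ + f₀ ∘ₗ H₀)
    (hP₂ : P₂ ∘ₗ d₂ + d₂ ∘ₗ P₂ = LinearMap.id + H₂ ∘ₗ f₂ + f₁ ∘ₗ H₁) :
    (∀ z : C₀, d₀ z = 0 → ((∃ x, f₀ z = d₁ x) ↔ ∃ y, d₂ y = 0 ∧ ∃ w, z = f₂ y + d₀ w)) ∧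
    (∀ z : C₁, d₁ z = 0 → ((∃ x, f₁ z = d₂ x) ↔ ∃ y, d₀ y = 0 ∧ ∃ w, z = f₀ y + d₁ w)) ∧
    (∀ z : C₂, d₂ z = 0 → ((∃ x, f₂ z = d₀ x) ↔ ∃ y, d₁ y = 0 ∧ ∃ w, z = f₁ y + d₂ w)) := by
  refine ⟨aux C₀ C₁ C₂ d₀ d₁ d₂ f₀ f₁ f₂ hf₀ hf₁ H₀ H₁ H₂ P₀ hH₀ hH₁ hH₂ hP₀,
    aux C₁ C₂ C₀ d₁ d₂ d₀ f₁ f₂ f₀ hf₁ hf₂ H₁ H₂ H₀ P₁ hH₁ hH₂ hH₀ hP₁,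
    aux C₂ C₀ C₁ d₂ d₀ d₁ f₂ f₀ f₁ hf₂ hf₀ H₂ H₀ H₁ P₂ hH₂ hH₀ hH₁ hP₂⟩
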